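/- Let G = (V, E_1, …, E_k) be a multilayer graph, E_i^N ⊆ (V choose 2)∖E_i sets of new edges, and S_i* ⊆ E_i ∪ E_i^N labelings (i ∈ [k]), and let s* = Σ_{i∈[k]} |(E_i^N ∪ E_i) ∖ S_i*| + d_k(S_1*,…,S_k*), where disagreements are computed over the edge sets E_i ∪ E_i^N. Define F_i = { e ∈ S_i* : e ∈ (E_j ∪ E_j^N)∖S_j* for some j ∈ [k] } and H_i* = S_i* ∖ F_i. Then d_k(H_1*,…,H_k*) = 0 and Σ_{i∈[k]} |(E_i^N ∪ E_i) ∖ H_i*| = s*; moreover, if each S_i* fulfills the STC for E_i ∪ E_i^N, then so does each H_i*. -/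

import Mathlib

open Finset

/-- A wedge `(v, {u, w})` of an edge set `E`. -/
def IsWedge {V : Type*} (E : Finset (Sym2 V)) (v u w : V) : Prop :=
  u ≠ v ∧ v ≠ w ∧ u ≠ w ∧ s(u, v) ∈ E ∧ s(v, w) ∈ E ∧ s(u, w) ∉ E

/-- A labeling `S ⊆ E` fulfills the strong triadic closure for `E`. -/
def FulfillsSTC {V : Type*} (E S : Finset (Sym2 V)) : Prop :=
  ∀ u v w : V, u ≠ v → v ≠ w → u ≠ w → s(u, v) ∈ S → s(v, w) ∈ S → s(u, w) ∈ E

/-- `s(e)`: the number of layers in which `e` is labeled strong. -/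
def sCount {V : Type*} [DecidableEq V] {k : ℕ} (Ss : Fin k → Finset (Sym2 V))
    (e : Sym2 V) : ℕ :=
  (Finset.univ.filter fun i => e ∈ Ss i).card

/-- `w(e)`: the number of layers in which `e` is labeled weak. -/
def wCount {V : Type*} [DecidableEq V] {k : ℕ} (Es Ss : Fin k → Finset (Sym2 V))
    (e : Sym2 V) : ℕ :=
  (Finset.univ.filter fun i => e ∈ Es i ∧ e ∉ Ss i).card

/-- `d_k(S_1, …, S_k) = ∑_{e ∈ E, w(e) > 0} s(e)`: the number of disagreements. -/
def disagree {V : Type*} [DecidableEq V] {k : ℕ} (Es Ss : Fin k → Finset (Sym2 V)) : ℕ :=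
  ∑ e ∈ (Finset.univ.biUnion Es).filter (fun e => 0 < wCount Es Ss e), sCount Ss e

/-- `(V choose 2)`: the set of all 2-element subsets of `V`, as elements of `Sym2 V`. -/
def allPairs (V : Type*) [Fintype V] [DecidableEq V] : Finset (Sym2 V) :=
  Finset.univ.filter fun e => ¬ e.IsDiag

/-
Relabeling every edge that is weak in some layer as weak in all layers removes each disagreement
at the price of exactly one weak label per strong label involved, and the disagreement count
`d_k(S*)` counts precisely these strong labels (double counting over pairs (layer, edge)). Passing
to a sublabeling can only help the STC, since it asks for an edge of `E_i ∪ E_i^N`, not of the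
labeling.
-/

theorem FulfillsSTC.mono {V : Type*} {E S T : Finset (Sym2 V)} (hS : FulfillsSTC E S)
    (hTS : T ⊆ S) : FulfillsSTC E T :=
  fun u v w huv hvw huw hu hw => hS u v w huv hvw huw (hTS hu) (hTS hw)

theorem Finset.card_sdiff_sdiff_of_subset {α : Type*} [DecidableEq α] {A S F : Finset α}
    (hFS : F ⊆ S) (hSA : S ⊆ A) : #(A \ (S \ F)) = #(A \ S) + #F := by
  have hF : #F ≤ #S := card_le_card hFS
  have hS : #S ≤ #A := card_le_card hSA
  rw [card_sdiff_of_subset (sdiff_subset.trans hSA), card_sdiff_of_subset hFS,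
    card_sdiff_of_subset hSA]
  omega

section Disagreements

variable {V : Type*} [DecidableEq V] {k : ℕ} (A S : Fin k → Finset (Sym2 V))

theorem zero_lt_wCount_iff {e : Sym2 V} : 0 < wCount A S e ↔ ∃ j, e ∈ A j ∧ e ∉ S j := by
  simp [wCount, card_pos, Finset.Nonempty]

theorem disagree_eq_zero_of_consistent (h : ∀ e i j, e ∈ S i → e ∈ A j → e ∈ S j) :
    disagree A S = 0 := by
  refine sum_eq_zero fun e he => card_eq_zero.mpr (filter_eq_empty_iff.mpr fun i _ hi => ?_)
  obtain ⟨j, hjA, hjS⟩ := (zero_lt_wCount_iff A S).mp (mem_filter.mp he).2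
  exact hjS (h e i j hi hjA)

theorem disagree_eq_sum_card_filter (hSA : ∀ i, S i ⊆ A i) :
    disagree A S = ∑ i, #((S i).filter fun e => 0 < wCount A S e) := by
  set T := (univ.biUnion A).filter fun e => 0 < wCount A S e
  have hT : ∀ i, (S i).filter (fun e => 0 < wCount A S e) = T.filter (· ∈ S i) := by
    intro i
    ext e
    simp only [T, mem_filter, mem_biUnion, mem_univ, true_and]
    exact ⟨fun ⟨hi, hw⟩ => ⟨⟨⟨i, hSA i hi⟩, hw⟩, hi⟩, fun ⟨⟨_, hw⟩, hi⟩ => ⟨hi, hw⟩⟩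
  simp_rw [hT]
  exact (sum_card_bipartiteAbove_eq_sum_card_bipartiteBelow (fun i e => e ∈ S i)).symm

end Disagreements

theorem consistent_relabeling_plus_general {V : Type*} [DecidableEq V] {k : ℕ}
    (Es ENs Ss : Fin k → Finset (Sym2 V))
    (hS : ∀ i, Ss i ⊆ Es i ∪ ENs i) :
    let A : Fin k → Finset (Sym2 V) := fun i => Es i ∪ ENs i
    let F : Fin k → Finset (Sym2 V) :=
      fun i => (Ss i).filter fun e => ∃ j, e ∈ A j ∧ e ∉ Ss j
    let H : Fin k → Finset (Sym2 V) := fun i => Ss i \ F i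
    disagree A H = 0 ∧
      (∑ i : Fin k, (A i \ H i).card) =
        (∑ i : Fin k, (A i \ Ss i).card) + disagree A Ss ∧
      ((∀ i, FulfillsSTC (A i) (Ss i)) → ∀ i, FulfillsSTC (A i) (H i)) := by
  intro A F H
  have hFS : ∀ i, F i ⊆ Ss i := fun i => filter_subset _ _
  refine ⟨?_, ?_, fun hSTC i => (hSTC i).mono sdiff_subset⟩
  · -- membership in `F i` does not depend on `i`, so an edge kept in one layer is kept in all
    refine disagree_eq_zero_of_consistent A H fun e i j hi hjA => ?_
    have hcons : ∀ j, e ∈ A j → e ∈ Ss j := by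
      simp only [H, F, mem_sdiff, mem_filter, not_and, not_exists, not_not] at hi
      exact hi.2 hi.1
    simp only [H, F, mem_sdiff, mem_filter, not_and, not_exists]
    exact ⟨hcons j hjA, fun _ l hlA => absurd (hcons l hlA)⟩
  · have hF : ∀ i, F i = (Ss i).filter fun e => 0 < wCount A Ss e := by
      simp_rw [zero_lt_wCount_iff]; exact fun _ => rfl
    rw [sum_congr rfl fun i _ => card_sdiff_sdiff_of_subset (hFS i) (hS i), sum_add_distrib,
      disagree_eq_sum_card_filter A Ss hS]
    simp_rw [hF]
    rfl

/-- STC+ version of the consistent-relabeling lemma: with new weak edges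
`E_i^N ⊆ (V choose 2) ∖ E_i` and labelings `S_i* ⊆ E_i ∪ E_i^N`, removing from each
`S_i*` the strong edges that are weak in some layer yields labelings `H_i*` with no
disagreements whose objective value `∑_i |(E_i^N ∪ E_i) ∖ H_i*|` equals
`s* = ∑_i |(E_i^N ∪ E_i) ∖ S_i*| + d_k(S_1*, …, S_k*)`; moreover if each `S_i*`
fulfills the STC for `E_i ∪ E_i^N` then so does each `H_i*`. -/
theorem consistent_relabeling_plus {V : Type*} [Fintype V] [DecidableEq V] {k : ℕ}
    (Es ENs Ss : Fin k → Finset (Sym2 V))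
    (hEN : ∀ i, ENs i ⊆ allPairs V \ Es i)
    (hS : ∀ i, Ss i ⊆ Es i ∪ ENs i) :
    let A : Fin k → Finset (Sym2 V) := fun i => Es i ∪ ENs i
    let F : Fin k → Finset (Sym2 V) :=
      fun i => (Ss i).filter fun e => ∃ j, e ∈ A j ∧ e ∉ Ss j
    let H : Fin k → Finset (Sym2 V) := fun i => Ss i \ F i
    disagree A H = 0 ∧
      (∑ i : Fin k, (A i \ H i).card) =
        (∑ i : Fin k, (A i \ Ss i).card) + disagree A Ss ∧
      ((∀ i, FulfillsSTC (A i) (Ss i)) → ∀ i, FulfillsSTC (A i) (H i)) :=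
  consistent_relabeling_plus_general Es ENs Ss hS
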